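/- (S-lemma) Let q(x) = xᵀAx + 2bᵀx + c be a quadratic function on ℝⁿ that is strictly positive at some point, and let D = {x : q(x) ≥ 0}. Then a quadratic function h(x) = xᵀPx + 2rᵀx + s satisfies h(x) ≥ 0 for all x ∈ D if and only if there exists η ≥ 0 such that M(h) − ηM(q) ⪰ 0, where M(q) = [[A, b],[bᵀ, c]] is the matrix representation. -/

import Mathlib

open scoped Matrix
open Matrix

/-- The matrix representation `M(q) = [[A, b],[bᵀ, c]]` of the quadratic function
`q(x) = xᵀAx + 2bᵀx + c`, as a symmetric matrix indexed by `Fin n ⊕ Unit`. -/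
def Mrep {n : ℕ} (A : Matrix (Fin n) (Fin n) ℝ) (b : Fin n → ℝ) (c : ℝ) :
    Matrix (Fin n ⊕ Unit) (Fin n ⊕ Unit) ℝ :=
  Matrix.fromBlocks A (Matrix.of fun i (_ : Unit) => b i)
    (Matrix.of fun (_ : Unit) j => b j) (Matrix.of fun (_ : Unit) (_ : Unit) => c)

/-!
The joint range of two real quadratic forms, the image of `F = (Q₁, Q₂)`, is a convex cone
(Dines). Positive scaling is clear; given two values `p = F u`, `q = F v` that are linearly
independent, the path `θ ↦ F ((1 - θ) • u ± θ • v)`, with the sign chosen so that it never meets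
the line through `0` parallel to `q - p`, runs from `p` to `q`, and by the intermediate value
theorem its rays sweep out the whole segment `[p, q]`.

After homogenizing `q` and `h` to the quadratic forms of `M(q)` and `M(h)` on `ℝⁿ⁺¹` (points with
last coordinate `0` are reached by density), the hypothesis says that this cone misses the open
quadrant `{x > 0, y < 0}`. A separating line passes through the origin because both sets are
cones, so `μ Q₁ + ν Q₂ ≥ 0` with `μ ≤ 0 ≤ ν`, and the Slater point forces `ν > 0`; then
`η = -μ / ν`.
-/

def planeDet (p q : ℝ × ℝ) : ℝ := p.1 * q.2 - p.2 * q.1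

lemma add_smul_mem_of_planeDet_eq_zero {W : Set (ℝ × ℝ)}
    (hW : ∀ s : ℝ, 0 ≤ s → ∀ p ∈ W, s • p ∈ W) {p q : ℝ × ℝ} (hp : p ∈ W) (hq : q ∈ W)
    (hpq : planeDet p q = 0) {a b : ℝ} (ha : 0 ≤ a) (hb : 0 ≤ b) : a • p + b • q ∈ W := by
  obtain rfl | hp0 := eq_or_ne p 0
  · simpa using hW b hb q hq
  obtain ⟨κ, rfl⟩ : ∃ κ : ℝ, q = κ • p := by
    have hN : p.1 ^ 2 + p.2 ^ 2 ≠ 0 := by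
      contrapose! hp0
      exact Prod.ext (by simp; nlinarith) (by simp; nlinarith)
    unfold planeDet at hpq
    refine ⟨(p.1 * q.1 + p.2 * q.2) / (p.1 ^ 2 + p.2 ^ 2), Prod.ext ?_ ?_⟩
    · simp only [Prod.smul_fst, smul_eq_mul]
      field_simp
      linear_combination -p.2 * hpq
    · simp only [Prod.smul_snd, smul_eq_mul]
      field_simp
      linear_combination p.1 * hpq
  rw [smul_smul, ← add_smul]
  rcases le_or_gt 0 (a + b * κ) with h | h
  · exact hW _ h p hp
  · have hκ : κ < 0 := by nlinarith
    rw [show (a + b * κ) • p = ((a + b * κ) / κ) • κ • p by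
      rw [smul_smul, div_mul_cancel₀ _ hκ.ne]]
    exact hW _ (div_nonneg_of_nonpos h.le hκ.le) _ hq

/-- The path `γ` never crosses the line through `0` parallel to `q - p`, so each point of `[p, q]`
is a positive multiple of some `γ θ`. -/
lemma add_smul_mem_of_path {W : Set (ℝ × ℝ)} (hW : ∀ s : ℝ, 0 < s → ∀ p ∈ W, s • p ∈ W)
    {p q : ℝ × ℝ} (hpq : planeDet p q ≠ 0) {γ : ℝ → ℝ × ℝ}
    (hγ : ContinuousOn γ (Set.Icc 0 1)) (hγ0 : γ 0 = p) (hγ1 : γ 1 = q)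
    (hγW : ∀ θ ∈ Set.Icc (0 : ℝ) 1, γ θ ∈ W)
    (hside : ∀ θ ∈ Set.Icc (0 : ℝ) 1, 0 < planeDet p q * planeDet (γ θ) (q - p))
    {t : ℝ} (ht : t ∈ Set.Icc (0 : ℝ) 1) : (1 - t) • p + t • q ∈ W := by
  set d := planeDet p q
  set g : ℝ → ℝ := fun θ => d * ((1 - t) * planeDet p (γ θ) - t * planeDet (γ θ) q)
  have hg : ContinuousOn g (Set.Icc 0 1) := by
    have hfst : ContinuousOn (fun θ => (γ θ).1) (Set.Icc 0 1) :=
      continuous_fst.comp_continuousOn hγ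
    have hsnd : ContinuousOn (fun θ => (γ θ).2) (Set.Icc 0 1) :=
      continuous_snd.comp_continuousOn hγ
    simp only [g, planeDet]
    fun_prop
  have h0 : g 0 ≤ 0 := by
    have : g 0 = -(t * d ^ 2) := by simp only [g, hγ0, d, planeDet]; ring
    rw [this, neg_nonpos]; exact mul_nonneg ht.1 (sq_nonneg d)
  have h1 : 0 ≤ g 1 := by
    have : g 1 = (1 - t) * d ^ 2 := by simp only [g, hγ1, d, planeDet]; ring
    rw [this]; exact mul_nonneg (sub_nonneg.2 ht.2) (sq_nonneg d)
  obtain ⟨θ, hθ, hgθ⟩ := intermediate_value_Icc zero_le_one hg ⟨h0, h1⟩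
  set y := γ θ
  have hy : (1 - t) * planeDet p y = t * planeDet y q := by
    simpa [g, hpq, sub_eq_zero] using hgθ
  set e := planeDet y (q - p)
  have hde : 0 < d * e := hside θ hθ
  have he : e ≠ 0 := right_ne_zero_of_mul hde.ne'
  have hcramer : e • ((1 - t) • p + t • q) = d • y := by
    unfold planeDet at hy
    ext
    · simp only [e, d, planeDet, Prod.smul_fst, Prod.fst_add, Prod.fst_sub, Prod.snd_sub,
        smul_eq_mul]
      linear_combination (p.1 - q.1) * hy
    · simp only [e, d, planeDet, Prod.smul_snd, Prod.snd_add, Prod.fst_sub, Prod.snd_sub,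
        smul_eq_mul]
      linear_combination (p.2 - q.2) * hy
  have hpos : 0 < d / e := by
    rw [show d / e = d * e / e ^ 2 by field_simp]
    positivity
  have := hW _ hpos y (hγW θ hθ)
  rwa [div_eq_inv_mul, mul_smul, ← hcramer, smul_smul, inv_mul_cancel₀ he, one_smul] at this

lemma nonneg_of_forall_le_mul {a c : ℝ} (h : ∀ s, 0 ≤ s → c ≤ s * a) : 0 ≤ a := by
  by_contra! ha
  have hc : c ≤ 0 := by simpa using h 0 le_rfl
  have := h ((1 - c) / -a) (div_nonneg (by linarith) (by linarith))
  rw [div_mul_eq_mul_div, div_neg, mul_div_cancel_right₀ _ ha.ne] at this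
  linarith

lemma StrongDual.apply_eq_fst_mul_add_snd_mul (f : StrongDual ℝ (ℝ × ℝ)) (p : ℝ × ℝ) :
    f p = p.1 * f (1, 0) + p.2 * f (0, 1) := by
  conv_lhs => rw [show p = p.1 • ((1 : ℝ), (0 : ℝ)) + p.2 • ((0 : ℝ), (1 : ℝ)) by ext <;> simp]
  rw [map_add, map_smul, map_smul, smul_eq_mul, smul_eq_mul]

namespace QuadraticMap

lemma map_smul_add_smul {R M : Type*} [CommRing R] [AddCommGroup M] [Module R M]
    (Q : QuadraticMap R M R) (a b : R) (u v : M) :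
    Q (a • u + b • v) = a ^ 2 * Q u + a * b * polar Q u v + b ^ 2 * Q v := by
  rw [QuadraticMap.map_add Q, QuadraticMap.map_smul, QuadraticMap.map_smul, polar_smul_left,
    polar_smul_right, smul_eq_mul, smul_eq_mul, smul_eq_mul, smul_eq_mul]
  ring

variable {V : Type*} [AddCommGroup V] [Module ℝ V]

def jointRange (Q₁ Q₂ : QuadraticMap ℝ V ℝ) : Set (ℝ × ℝ) := Set.range fun v => (Q₁ v, Q₂ v)

lemma smul_mem_jointRange {Q₁ Q₂ : QuadraticMap ℝ V ℝ} {s : ℝ} (hs : 0 ≤ s) {p : ℝ × ℝ}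
    (hp : p ∈ jointRange Q₁ Q₂) : s • p ∈ jointRange Q₁ Q₂ := by
  obtain ⟨v, rfl⟩ := hp
  exact ⟨√s • v, by simp [QuadraticMap.map_smul, Real.mul_self_sqrt hs]⟩

theorem convex_jointRange (Q₁ Q₂ : QuadraticMap ℝ V ℝ) : Convex ℝ (jointRange Q₁ Q₂) := by
  rintro _ ⟨u, rfl⟩ _ ⟨v, rfl⟩ a b ha hb hab
  by_cases hd : planeDet (Q₁ u, Q₂ u) (Q₁ v, Q₂ v) = 0
  · exact add_smul_mem_of_planeDet_eq_zero (fun s hs _ => smul_mem_jointRange hs) ⟨u, rfl⟩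
      ⟨v, rfl⟩ hd ha hb
  obtain rfl : a = 1 - b := by linarith
  -- Replacing `v` by `-v` if necessary makes the cross term of the path below harmless.
  obtain ⟨w, hwv, hcross⟩ : ∃ w, (Q₁ w, Q₂ w) = (Q₁ v, Q₂ v) ∧
      0 ≤ planeDet (Q₁ u, Q₂ u) (Q₁ w, Q₂ w) *
        planeDet (polar Q₁ u w, polar Q₂ u w) ((Q₁ w, Q₂ w) - (Q₁ u, Q₂ u)) := by
    rcases le_total 0 (planeDet (Q₁ u, Q₂ u) (Q₁ v, Q₂ v) *
        planeDet (polar Q₁ u v, polar Q₂ u v) ((Q₁ v, Q₂ v) - (Q₁ u, Q₂ u))) with h | h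
    · exact ⟨v, rfl, h⟩
    · refine ⟨-v, by simp, ?_⟩
      simp only [polar_neg_right, QuadraticMap.map_neg, planeDet] at h ⊢
      linarith
  show (1 - b) • (Q₁ u, Q₂ u) + b • (Q₁ v, Q₂ v) ∈ jointRange Q₁ Q₂
  rw [← hwv] at hd ⊢
  set γ : ℝ → ℝ × ℝ := fun θ =>
    ((1 - θ) ^ 2 * Q₁ u + (1 - θ) * θ * polar Q₁ u w + θ ^ 2 * Q₁ w,
      (1 - θ) ^ 2 * Q₂ u + (1 - θ) * θ * polar Q₂ u w + θ ^ 2 * Q₂ w)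
  refine add_smul_mem_of_path (fun s hs _ => smul_mem_jointRange hs.le) hd (γ := γ)
    (by fun_prop) (by simp [γ]) (by simp [γ]) (fun θ _ => ⟨(1 - θ) • u + θ • w, ?_⟩)
    (fun θ hθ => ?_) ⟨hb, by linarith⟩
  · simp [γ, map_smul_add_smul]
  · set d := planeDet (Q₁ u, Q₂ u) (Q₁ w, Q₂ w)
    have hγ : d * planeDet (γ θ) ((Q₁ w, Q₂ w) - (Q₁ u, Q₂ u)) = ((1 - θ) ^ 2 + θ ^ 2) * d ^ 2
        + (1 - θ) * θ * (d * planeDet (polar Q₁ u w, polar Q₂ u w)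
          ((Q₁ w, Q₂ w) - (Q₁ u, Q₂ u))) := by
      simp only [γ, d, planeDet, Prod.fst_sub, Prod.snd_sub]
      ring
    have hθ' : 0 ≤ (1 - θ) * θ := mul_nonneg (sub_nonneg.2 hθ.2) hθ.1
    have hθ'' : 0 < (1 - θ) ^ 2 + θ ^ 2 := by nlinarith
    rw [hγ]
    positivity

theorem exists_mul_le_of_pos_imp_nonneg {Q₁ Q₂ : QuadraticMap ℝ V ℝ}
    (hslater : ∃ v, 0 < Q₁ v) (h : ∀ v, 0 < Q₁ v → 0 ≤ Q₂ v) :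
    ∃ η : ℝ, 0 ≤ η ∧ ∀ v, η * Q₁ v ≤ Q₂ v := by
  set C : Set (ℝ × ℝ) := Set.Ioi 0 ×ˢ Set.Iio 0
  have hdisj : Disjoint C (jointRange Q₁ Q₂) := by
    rw [Set.disjoint_left]
    rintro _ ⟨h₁, h₂⟩ ⟨v, rfl⟩
    exact (h v h₁).not_gt h₂
  obtain ⟨f, c, hfC, hfW⟩ := geometric_hahn_banach_open ((convex_Ioi 0).prod (convex_Iio 0))
    (isOpen_Ioi.prod isOpen_Iio) (convex_jointRange Q₁ Q₂) hdisj
  have hc : c ≤ 0 := by simpa using hfW 0 ⟨0, by simp⟩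
  have hfW₀ (v : V) : 0 ≤ f (Q₁ v, Q₂ v) := nonneg_of_forall_le_mul (c := c) fun s hs => by
    rw [← smul_eq_mul, ← map_smul]
    exact hfW _ (smul_mem_jointRange hs ⟨v, rfl⟩)
  have hfC₀ : ∀ p ∈ closure C, f p ≤ 0 := fun p hp =>
    closure_minimal (fun p hp => ((hfC p hp).trans_le hc).le)
      (isClosed_le f.continuous continuous_const) hp
  rw [closure_prod_eq, closure_Ioi, closure_Iio] at hfC₀
  have hμ : f (1, 0) ≤ 0 := hfC₀ (1, 0) (by simp)
  have hν : 0 ≤ f (0, 1) := by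
    have := hfC₀ (0, -1) (by simp)
    rw [StrongDual.apply_eq_fst_mul_add_snd_mul] at this
    linarith
  have hν₀ : 0 < f (0, 1) := by
    refine hν.lt_of_ne fun hν₀ => ?_
    obtain ⟨v, hv⟩ := hslater
    have h₁ := hfC (1, -1) (by simp)
    have h₂ := hfW₀ v
    rw [StrongDual.apply_eq_fst_mul_add_snd_mul, ← hν₀] at h₁ h₂
    nlinarith
  refine ⟨-f (1, 0) / f (0, 1), div_nonneg (neg_nonneg.2 hμ) hν, fun v => ?_⟩
  have := hfW₀ v
  rw [StrongDual.apply_eq_fst_mul_add_snd_mul] at this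
  rw [div_mul_eq_mul_div, div_le_iff₀ hν₀]
  linarith

lemma pos_imp_nonneg_of_apply_eq_one {ι : Type*} {Q₁ Q₂ : QuadraticMap ℝ (ι → ℝ) ℝ}
    (hQ₁ : Continuous Q₁) (hQ₂ : Continuous Q₂) (i : ι)
    (h : ∀ z : ι → ℝ, z i = 1 → 0 < Q₁ z → 0 ≤ Q₂ z) (z : ι → ℝ) (hz : 0 < Q₁ z) :
    0 ≤ Q₂ z := by
  by_contra! hz'
  obtain ⟨y, hy, hy₁, hy₂⟩ : ∃ y : ι → ℝ, y i ≠ 0 ∧ 0 < Q₁ y ∧ Q₂ y < 0 :=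
    ((dense_compl_singleton (0 : ℝ)).preimage (isOpenMap_eval i)).exists_mem_open
      ((isOpen_lt continuous_const hQ₁).inter (isOpen_lt hQ₂ continuous_const)) ⟨z, hz, hz'⟩
  have hsq : 0 < (y i)⁻¹ * (y i)⁻¹ := mul_self_pos.2 (inv_ne_zero hy)
  have := h ((y i)⁻¹ • y) (by simp [hy]) (by rw [Q₁.map_smul, smul_eq_mul]; exact mul_pos hsq hy₁)
  rw [Q₂.map_smul, smul_eq_mul] at this
  exact (mul_neg_of_pos_of_neg hsq hy₂).not_ge this

end QuadraticMap

lemma Matrix.toQuadraticForm'_apply {ι : Type*} [Fintype ι] [DecidableEq ι]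
    (M : Matrix ι ι ℝ) (z : ι → ℝ) : M.toQuadraticForm' z = z ⬝ᵥ M *ᵥ z := by
  simp [Matrix.toQuadraticForm', toLinearMap₂'_apply']

lemma Matrix.continuous_toQuadraticForm' {ι : Type*} [Fintype ι] [DecidableEq ι]
    (M : Matrix ι ι ℝ) : Continuous M.toQuadraticForm' := by
  simp only [funext (toQuadraticForm'_apply M)]
  fun_prop

lemma dotProduct_Mrep_mulVec {n : ℕ} (A : Matrix (Fin n) (Fin n) ℝ) (b : Fin n → ℝ) (c : ℝ)
    (z : Fin n ⊕ Unit → ℝ) :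
    z ⬝ᵥ Mrep A b c *ᵥ z = (z ∘ Sum.inl) ⬝ᵥ A *ᵥ (z ∘ Sum.inl)
      + 2 * z (Sum.inr ()) * (b ⬝ᵥ z ∘ Sum.inl) + z (Sum.inr ()) ^ 2 * c := by
  rw [Mrep, fromBlocks_mulVec, dotProduct_block]
  simp only [dotProduct, mulVec, Function.comp_apply, Sum.elim_inl, Sum.elim_inr, Pi.add_apply,
    of_apply, Fintype.sum_unique, mul_add, Finset.sum_add_distrib]
  have hcross : ∑ i, z (Sum.inl i) * (b i * z (Sum.inr ())) =
      z (Sum.inr ()) * ∑ i, b i * z (Sum.inl i) := by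
    rw [Finset.mul_sum]; exact Finset.sum_congr rfl fun i _ => by ring
  rw [hcross]
  ring

lemma Mrep_isHermitian {n : ℕ} {A : Matrix (Fin n) (Fin n) ℝ} (hA : A.IsSymm) (b : Fin n → ℝ)
    (c : ℝ) : (Mrep A b c).IsHermitian :=
  IsHermitian.fromBlocks (isHermitian_iff_isSymm.2 hA) (by ext; simp) (by ext; simp)

/-- S-lemma, Yakubovich. Let `q(x) = xᵀAx + 2bᵀx + c` be a
quadratic function on `ℝⁿ` that is strictly positive somewhere, and
`D = {x : q(x) ≥ 0}`. Then `h(x) = xᵀPx + 2rᵀx + s` is nonnegative on `D` iff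
there exists `η ≥ 0` with `M(h) − ηM(q) ⪰ 0`. -/
theorem s_lemma {n : ℕ}
    (A P : Matrix (Fin n) (Fin n) ℝ) (hA : A.IsSymm) (hP : P.IsSymm)
    (b r : Fin n → ℝ) (c s : ℝ)
    (hslater : ∃ x : Fin n → ℝ, 0 < x ⬝ᵥ A.mulVec x + 2 * (b ⬝ᵥ x) + c) :
    (∀ x : Fin n → ℝ, 0 ≤ x ⬝ᵥ A.mulVec x + 2 * (b ⬝ᵥ x) + c →
        0 ≤ x ⬝ᵥ P.mulVec x + 2 * (r ⬝ᵥ x) + s) ↔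
      ∃ η : ℝ, 0 ≤ η ∧ (Mrep P r s - η • Mrep A b c).PosSemidef := by
  constructor
  · intro hpos
    obtain ⟨x₀, hx₀⟩ := hslater
    have hslater' : ∃ z, 0 < (Mrep A b c).toQuadraticForm' z :=
      ⟨Sum.elim x₀ 1, by simpa [toQuadraticForm'_apply, dotProduct_Mrep_mulVec] using hx₀⟩
    have hhom : ∀ z, 0 < (Mrep A b c).toQuadraticForm' z → 0 ≤ (Mrep P r s).toQuadraticForm' z :=
      QuadraticMap.pos_imp_nonneg_of_apply_eq_one (continuous_toQuadraticForm' _)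
        (continuous_toQuadraticForm' _) (Sum.inr ()) fun z hz hq => by
          simp only [toQuadraticForm'_apply, dotProduct_Mrep_mulVec, hz] at hq ⊢
          simpa using hpos _ (by simpa using hq.le)
    obtain ⟨η, hη, hle⟩ := QuadraticMap.exists_mul_le_of_pos_imp_nonneg hslater' hhom
    refine ⟨η, hη, .of_dotProduct_mulVec_nonneg ((Mrep_isHermitian hP r s).sub
      ((Mrep_isHermitian hA b c).smul (IsSelfAdjoint.all η))) fun z => ?_⟩
    simpa [toQuadraticForm'_apply, sub_mulVec, smul_mulVec] using hle z
  · rintro ⟨η, hη, hpsd⟩ x hq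
    have := hpsd.dotProduct_mulVec_nonneg (Sum.elim x 1)
    simp only [star_trivial, sub_mulVec, smul_mulVec, dotProduct_sub, dotProduct_Mrep_mulVec,
      Sum.elim_comp_inl, Sum.elim_inr, Pi.one_apply, mul_one, one_pow, one_mul, dotProduct_smul,
      smul_eq_mul, sub_nonneg] at this
    nlinarith [mul_nonneg hη hq]
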